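/- There exists a function σ : ℝ → ℝ such that for every continuous function f on a finite segment [a,b] ⊂ ℝ and every ε > 0, there exist real constants c₁, c₂, θ₁, θ₂ with |f(x) - c₁σ(x - θ₁) - c₂σ(x - θ₂)| < ε for all x ∈ [a,b]; moreover σ can be chosen to be sigmoidal (σ(t) → 0 as t → -∞ and σ(t) → 1 as t → +∞). -/

import Mathlib

/-!
On `[0, ∞)` the activation `σ` is cut into blocks `[k², (k + 1)²)`. On the `k`-th block
`σ = 1 + β_k g_k(· - k²)`, where `g_k` runs through a dense sequence of `C(ℝ, ℝ)` (compact-open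
topology) so that every term occurs on arbitrarily long blocks, and `β_k > 0` is so small that
`|σ - 1| ≤ 1 / (k + 1)` there; hence `σ → 1` at `+∞`, while `σ = 0` on `(-∞, 0)`.
Given `f` on `[a, b]`, choose a block whose `g_k` is close to `f(· + a)` on `[0, b - a]`: then
`β_k⁻¹ (σ(x - a + k²) - 1) ≈ f x`, and the constant `-β_k⁻¹` is supplied by a second neuron
shifted so far to the right that `σ ≈ 1` on it.
-/

open Filter Topology Set TopologicalSpace

theorem ContinuousMap.exists_forall_dist_lt_of_denseRange {X Y ι : Type*} [TopologicalSpace X]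
    [PseudoMetricSpace Y] {u : ι → C(X, Y)} (hu : DenseRange u) (F : C(X, Y)) {K : Set X}
    (hK : IsCompact K) {ε : ℝ} (hε : 0 < ε) : ∃ i, ∀ x ∈ K, dist (F x) (u i x) < ε :=
  hu.mem_nhds <| Metric.tendstoUniformlyOn_iff.1
    (tendsto_iff_forall_isCompact_tendstoUniformlyOn.1 (tendsto_id (x := 𝓝 F)) K hK) ε hε

theorem ContinuousOn.exists_continuousMap_eqOn_Icc {α β : Type*} [LinearOrder α]
    [TopologicalSpace α] [OrderTopology α] [TopologicalSpace β] {f : α → β} {a b : α}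
    (hab : a ≤ b) (hf : ContinuousOn f (Icc a b)) : ∃ F : C(α, β), EqOn F f (Icc a b) :=
  ⟨.IccExtend hab ⟨_, hf.domRestrict⟩,
    fun _ hx ↦ IccExtend_of_mem hab ((Icc a b).domRestrict f) hx⟩

theorem exists_two_neuron_approx {σ : ℝ → ℝ} (hσ : Tendsto σ atTop (𝓝 1))
    (hshift : ∀ (F : C(ℝ, ℝ)) (L ε : ℝ), 0 < ε →
      ∃ c θ : ℝ, ∀ t ∈ Icc 0 L, |c * (σ (t + θ) - 1) - F t| < ε)
    {a b : ℝ} (hab : a ≤ b) {f : ℝ → ℝ} (hf : ContinuousOn f (Icc a b)) {ε : ℝ} (hε : 0 < ε) :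
    ∃ c₁ c₂ θ₁ θ₂ : ℝ, ∀ x ∈ Icc a b, |f x - c₁ * σ (x - θ₁) - c₂ * σ (x - θ₂)| < ε := by
  obtain ⟨F, hF⟩ := hf.exists_continuousMap_eqOn_Icc hab
  obtain ⟨c, θ, hcθ⟩ := hshift (F.comp (.addRight a)) (b - a) (ε / 2) (half_pos hε)
  have hδ : 0 < ε / 2 / (|c| + 1) := by positivity
  obtain ⟨T, hT⟩ := Metric.tendsto_atTop.1 hσ _ hδ
  refine ⟨c, -c, a - θ, a - T, fun x hx ↦ ?_⟩
  have h₁ : |c * (σ (x - (a - θ)) - 1) - f x| < ε / 2 := by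
    simpa [← hF hx, sub_sub_eq_add_sub, add_sub_right_comm] using
      hcθ (x - a) ⟨sub_nonneg.2 hx.1, sub_le_sub_right hx.2 a⟩
  have h₂ : |c * (σ (x - (a - T)) - 1)| < ε / 2 := by
    have := hT (x - (a - T)) (by linarith [hx.1])
    rw [Real.dist_eq] at this
    rw [abs_mul]
    calc |c| * |σ (x - (a - T)) - 1| ≤ (|c| + 1) * |σ (x - (a - T)) - 1| := by gcongr; linarith
      _ < (|c| + 1) * (ε / 2 / (|c| + 1)) := by gcongr
      _ = ε / 2 := by field_simp
  calc |f x - c * σ (x - (a - θ)) - -c * σ (x - (a - T))|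
      = |-(c * (σ (x - (a - θ)) - 1) - f x) + c * (σ (x - (a - T)) - 1)| := by ring_nf
    _ ≤ |c * (σ (x - (a - θ)) - 1) - f x| + |c * (σ (x - (a - T)) - 1)| :=
      (abs_add_le _ _).trans_eq (by rw [abs_neg])
    _ < ε := by linarith

namespace UniversalSigmoid

noncomputable def blockIndex (x : ℝ) : ℕ := Nat.sqrt ⌊x⌋₊

lemma sq_blockIndex_le {x : ℝ} (hx : 0 ≤ x) : (blockIndex x : ℝ) ^ 2 ≤ x :=
  calc (blockIndex x : ℝ) ^ 2 ≤ ⌊x⌋₊ := mod_cast Nat.sqrt_le' _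
    _ ≤ x := Nat.floor_le hx

lemma lt_sq_blockIndex_add_one (x : ℝ) : x < ((blockIndex x : ℝ) + 1) ^ 2 :=
  calc x < ⌊x⌋₊ + 1 := Nat.lt_floor_add_one x
    _ ≤ ((blockIndex x : ℝ) + 1) ^ 2 := mod_cast Nat.lt_succ_sqrt' _

lemma blockIndex_eq {k : ℕ} {x : ℝ} (h₁ : (k : ℝ) ^ 2 ≤ x) (h₂ : x < ((k : ℝ) + 1) ^ 2) :
    blockIndex x = k := by
  refine (Nat.eq_sqrt'.2 ⟨Nat.le_floor (mod_cast h₁), ?_⟩).symm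
  exact (Nat.floor_lt ((sq_nonneg _).trans h₁)).2 (mod_cast h₂)

lemma tendsto_blockIndex_atTop : Tendsto blockIndex atTop atTop :=
  tendsto_atTop.2 fun N ↦ (eventually_ge_atTop ((N : ℝ) ^ 2)).mono fun _ hx ↦
    Nat.le_sqrt'.2 (Nat.le_floor (mod_cast hx))

/-- `(Nat.unpair k).2` takes every value for arbitrarily large `k`. -/
noncomputable def blockFun (k : ℕ) : C(ℝ, ℝ) := denseSeq C(ℝ, ℝ) k.unpair.2

noncomputable def blockScale (k : ℕ) : ℝ :=
  ((k + 1) * (‖(blockFun k).restrict (Icc (0 : ℝ) (2 * k + 1))‖ + 1))⁻¹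

lemma blockScale_pos (k : ℕ) : 0 < blockScale k := by
  unfold blockScale; positivity

lemma abs_blockScale_mul_le {k : ℕ} {t : ℝ} (ht : t ∈ Icc (0 : ℝ) (2 * k + 1)) :
    |blockScale k * blockFun k t| ≤ 1 / (k + 1) := by
  have hg : |blockFun k t| ≤ ‖(blockFun k).restrict (Icc (0 : ℝ) (2 * k + 1))‖ + 1 :=
    ((blockFun k).restrict _ |>.norm_coe_le_norm ⟨t, ht⟩).trans
      (le_add_of_nonneg_right zero_le_one)
  have hk := (blockScale_pos k).le
  calc |blockScale k * blockFun k t| = blockScale k * |blockFun k t| := by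
        rw [abs_mul, abs_of_nonneg hk]
    _ ≤ blockScale k * (‖(blockFun k).restrict (Icc (0 : ℝ) (2 * k + 1))‖ + 1) := by gcongr
    _ = 1 / (k + 1) := by unfold blockScale; field_simp

noncomputable def sigmoid (x : ℝ) : ℝ :=
  if x < 0 then 0
  else 1 + blockScale (blockIndex x) * blockFun (blockIndex x) (x - blockIndex x ^ 2)

lemma tendsto_sigmoid_atBot : Tendsto sigmoid atBot (𝓝 0) :=
  tendsto_const_nhds.congr' <| (eventually_lt_atBot 0).mono fun _ hx ↦ (if_pos hx).symm

lemma abs_sigmoid_sub_one_le {x : ℝ} (hx : 0 ≤ x) :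
    |sigmoid x - 1| ≤ 1 / (blockIndex x + 1) := by
  rw [sigmoid, if_neg hx.not_gt, add_sub_cancel_left]
  refine abs_blockScale_mul_le ⟨sub_nonneg.2 (sq_blockIndex_le hx), ?_⟩
  linarith [lt_sq_blockIndex_add_one x]

lemma tendsto_sigmoid_atTop : Tendsto sigmoid atTop (𝓝 1) := by
  refine tendsto_sub_nhds_zero_iff.1 <| squeeze_zero_norm' ?_ <|
    tendsto_one_div_add_atTop_nhds_zero_nat.comp tendsto_blockIndex_atTop
  exact (eventually_ge_atTop 0).mono fun _ hx ↦ abs_sigmoid_sub_one_le hx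

lemma sigmoid_add_sq {k : ℕ} {t : ℝ} (ht₀ : 0 ≤ t) (ht : t < 2 * k + 1) :
    sigmoid (t + k ^ 2) = 1 + blockScale k * blockFun k t := by
  have hk : blockIndex (t + k ^ 2) = k := blockIndex_eq (by linarith) (by linarith)
  rw [sigmoid, if_neg (by positivity : (0 : ℝ) ≤ t + k ^ 2).not_gt, hk, add_sub_cancel_right]

lemma exists_shift_approx (F : C(ℝ, ℝ)) (L ε : ℝ) (hε : 0 < ε) :
    ∃ c θ : ℝ, ∀ t ∈ Icc 0 L, |c * (sigmoid (t + θ) - 1) - F t| < ε := by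
  obtain ⟨n, hn⟩ := ContinuousMap.exists_forall_dist_lt_of_denseRange
    (denseRange_denseSeq C(ℝ, ℝ)) F isCompact_Icc hε
  obtain ⟨N, hN⟩ := exists_nat_gt L
  set k := Nat.pair N n
  have hfun : blockFun k = denseSeq C(ℝ, ℝ) n := by simp [k, blockFun]
  have hNk : (N : ℝ) ≤ k := mod_cast Nat.left_le_pair N n
  refine ⟨(blockScale k)⁻¹, k ^ 2, fun t ht ↦ ?_⟩
  rw [sigmoid_add_sq ht.1 (by linarith [ht.2]), add_sub_cancel_left,
    inv_mul_cancel_left₀ (blockScale_pos k).ne', hfun, abs_sub_comm, ← Real.dist_eq]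
  exact hn t ht

end UniversalSigmoid

/-- There exists a sigmoidal activation function `σ` such that any continuous function on any
finite segment `[a,b]` can be approximated arbitrarily well by a single hidden layer network
with fixed weight `1` and two hidden neurons. -/
theorem exists_universal_sigmoidal_two_neurons :
    ∃ σ : ℝ → ℝ,
      Filter.Tendsto σ Filter.atBot (nhds 0) ∧
      Filter.Tendsto σ Filter.atTop (nhds 1) ∧
      ∀ (a b : ℝ), a < b → ∀ f : ℝ → ℝ, ContinuousOn f (Set.Icc a b) →
        ∀ ε : ℝ, 0 < ε →
          ∃ c₁ c₂ θ₁ θ₂ : ℝ, ∀ x ∈ Set.Icc a b,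
            |f x - c₁ * σ (x - θ₁) - c₂ * σ (x - θ₂)| < ε := by
  open UniversalSigmoid in
  exact ⟨sigmoid, tendsto_sigmoid_atBot, tendsto_sigmoid_atTop, fun _ _ hab _ hf _ hε ↦
    exists_two_neuron_approx tendsto_sigmoid_atTop exists_shift_approx hab.le hf hε⟩
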